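/- arXiv:math/0702237 — 5 statements merged into one kernel-verified Lean document; each statement's English description precedes it below -/
import Mathlib

section
/- Let Σ be a C² hypersurface in ℝⁿ and let X, Y be smooth vector fields on ℝⁿ. Then the set V = {p ∈ Σ : X_p ∈ T_pΣ, Y_p ∈ T_pΣ, and [X,Y]_p ∉ T_pΣ} has Hausdorff dimension at most n − 2. -/
open scoped ENNReal

/-- `φ` is a local C² defining function for the hypersurface `S` near `p`,
valid on the neighbourhood `U`. -/
def IsLocalDefiningFn {n : ℕ} (S : Set (EuclideanSpace ℝ (Fin n)))
    (U : Set (EuclideanSpace ℝ (Fin n))) (φ : EuclideanSpace ℝ (Fin n) → ℝ)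
    (p : EuclideanSpace ℝ (Fin n)) : Prop :=
  U ∈ nhds p ∧ ContDiff ℝ 2 φ ∧ (∀ q ∈ U, (q ∈ S ↔ φ q = 0)) ∧
    ∀ q ∈ U, fderiv ℝ φ q ≠ 0

/-- The Lie bracket of two vector fields on ℝⁿ. -/
noncomputable def vecLieBracket {n : ℕ}
    (X Y : EuclideanSpace ℝ (Fin n) → EuclideanSpace ℝ (Fin n)) :
    EuclideanSpace ℝ (Fin n) → EuclideanSpace ℝ (Fin n) :=
  fun p => fderiv ℝ Y p (X p) - fderiv ℝ X p (Y p)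

open Module MeasureTheory Set Filter

theorem aux_fiber {E F : Type*} [NormedAddCommGroup E] [NormedSpace ℝ E] [CompleteSpace E]
    [FiniteDimensional ℝ E]
    [NormedAddCommGroup F] [NormedSpace ℝ F] [FiniteDimensional ℝ F]
    {f : E → F} {f' : E →L[ℝ] F} {a : E} (hf : HasStrictFDerivAt f f' a)
    (hf' : f'.range = ⊤) :
    ∃ t ∈ nhds a, dimH {x ∈ t | f x = f a} ≤ (finrank ℝ (f'.ker) : ℝ≥0∞) := by
  have : CompleteSpace F := FiniteDimensional.complete ℝ F
  have hker : (f'.ker).ClosedComplemented :=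
    f'.ker_closedComplemented_of_finiteDimensional_range
  set g := hf.implicitFunctionOfComplemented f f' hf' hker with hg_def
  have hg : HasStrictFDerivAt (g (f a)) (f'.ker).subtypeL 0 :=
    hf.to_implicitFunctionOfComplemented hf' hker
  obtain ⟨K, s, hs, hls⟩ := hg.exists_lipschitzOnWith
  set ψ := hf.implicitToOpenPartialHomeomorphOfComplemented f f' hf' hker with hψ_def
  have heq : ∀ᶠ x in nhds a, g (f x) (ψ x).snd = x :=
    hf.eq_implicitFunctionOfComplemented hf' hker
  have hcont : Continuous fun x => (ψ x).snd := by
    have : (fun x => (ψ x).snd) = fun x => Classical.choose hker (x - a) := by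
      funext x
      rw [hψ_def, hf.implicitToOpenPartialHomeomorphOfComplemented_apply]
    rw [this]
    exact (Classical.choose hker).continuous.comp (continuous_id.sub continuous_const)
  have hψa : (ψ a).snd = 0 := by
    rw [hψ_def, hf.implicitToOpenPartialHomeomorphOfComplemented_self]
  have hpre : (fun x => (ψ x).snd) ⁻¹' s ∈ nhds a := by
    apply hcont.continuousAt.preimage_mem_nhds
    rwa [hψa]
  refine ⟨{x | g (f x) (ψ x).snd = x} ∩ (fun x => (ψ x).snd) ⁻¹' s,
    Filter.inter_mem heq hpre, ?_⟩
  have hsub : {x ∈ ({x | g (f x) (ψ x).snd = x} ∩ (fun x => (ψ x).snd) ⁻¹' s) | f x = f a}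
      ⊆ g (f a) '' s := by
    rintro x ⟨⟨hx1, hx2⟩, hx3⟩
    exact ⟨(ψ x).snd, hx2, by rw [← hx3]; exact hx1⟩
  calc dimH _ ≤ dimH (g (f a) '' s) := dimH_mono hsub
    _ ≤ dimH s := hls.dimH_image_le
    _ ≤ dimH (univ : Set (f'.ker)) := dimH_mono (subset_univ _)
    _ = (finrank ℝ (f'.ker) : ℝ≥0∞) := Real.dimH_univ_eq_finrank _

theorem aux_surj {E : Type*} [NormedAddCommGroup E] [NormedSpace ℝ E]
    {f' : E →L[ℝ] ℝ × ℝ} {v w : E} (h1 : (f' v).1 ≠ 0) (h2 : (f' w).1 = 0)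
    (h3 : (f' w).2 ≠ 0) : f'.range = ⊤ := by
  rw [LinearMap.range_eq_top]
  rintro ⟨s, t⟩
  set α := (f' v).1
  refine ⟨(s/α) • v + ((t - (s/α) * (f' v).2)/(f' w).2) • w, ?_⟩
  have e1 : f' ((s/α) • v + ((t - (s/α) * (f' v).2)/(f' w).2) • w)
      = (s/α) • f' v + ((t - (s/α) * (f' v).2)/(f' w).2) • f' w := by
    rw [map_add, f'.map_smul, f'.map_smul]
  rw [ContinuousLinearMap.coe_coe, e1]
  have : ∀ (a b : ℝ) (x y : ℝ × ℝ), a • x + b • y = (a * x.1 + b * y.1, a * x.2 + b * y.2) := by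
    intro a b x y; rfl
  rw [this, h2, Prod.ext_iff]
  constructor
  · show s/α * α + _ * 0 = s
    field_simp
    ring
  · show s/α * (f' v).2 + _ * (f' w).2 = t
    field_simp
    ring

theorem aux_main {n : ℕ} {V : Set (EuclideanSpace ℝ (Fin n))} {p : EuclideanSpace ℝ (Fin n)}
    {φ G : EuclideanSpace ℝ (Fin n) → ℝ} (hφ : ContDiffAt ℝ 1 φ p) (hG : ContDiffAt ℝ 1 G p)
    {v w : EuclideanSpace ℝ (Fin n)}
    (h1 : fderiv ℝ φ p v ≠ 0) (h2 : fderiv ℝ φ p w = 0) (h3 : fderiv ℝ G p w ≠ 0)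
    (hsub : ∀ᶠ q in nhds p, q ∈ V → (φ q = 0 ∧ G q = 0))
    (hφ0 : φ p = 0) (hG0 : G p = 0) :
    ∃ t ∈ nhdsWithin p V, dimH t ≤ (n : ℝ≥0∞) - 2 := by
  set F : EuclideanSpace ℝ (Fin n) → ℝ × ℝ := fun q => (φ q, G q) with hF_def
  set F' := (fderiv ℝ φ p).prod (fderiv ℝ G p) with hF'_def
  have hdφ : HasFDerivAt φ (fderiv ℝ φ p) p := (hφ.differentiableAt one_ne_zero).hasFDerivAt
  have hdG : HasFDerivAt G (fderiv ℝ G p) p := (hG.differentiableAt one_ne_zero).hasFDerivAt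
  have hF'at : HasFDerivAt F F' p := hdφ.prodMk hdG
  have hstrict : HasStrictFDerivAt F F' p := by
    have := (hφ.prodMk hG).hasStrictFDerivAt one_ne_zero
    rwa [hF'at.fderiv] at this
  have happv : F' v = (fderiv ℝ φ p v, fderiv ℝ G p v) := rfl
  have happw : F' w = (fderiv ℝ φ p w, fderiv ℝ G p w) := rfl
  have hsurj : F'.range = ⊤ := by
    apply aux_surj (v := v) (w := w) <;> simp [happv, happw, h1, h2, h3]
  obtain ⟨t, ht, hdim⟩ := aux_fiber hstrict hsurj
  have hrank : finrank ℝ (F'.ker) = n - 2 ∧ 2 ≤ n := by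
    have h := LinearMap.finrank_range_add_finrank_ker (F' : EuclideanSpace ℝ (Fin n) →ₗ[ℝ] ℝ × ℝ)
    have hker_eq : LinearMap.ker (F' : EuclideanSpace ℝ (Fin n) →ₗ[ℝ] ℝ × ℝ)
        = F'.ker := rfl
    have hrange_eq : LinearMap.range (F' : EuclideanSpace ℝ (Fin n) →ₗ[ℝ] ℝ × ℝ)
        = F'.range := rfl
    rw [hker_eq, hrange_eq, hsurj, finrank_top] at h
    have h2 : finrank ℝ (ℝ × ℝ) = 2 := by
      simp [Module.finrank_prod]
    rw [h2, finrank_euclideanSpace_fin] at h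
    omega
  refine ⟨V ∩ (t ∩ {q | q ∈ V → (φ q = 0 ∧ G q = 0)}),
    inter_mem_nhdsWithin V (Filter.inter_mem ht hsub), ?_⟩
  have hss : V ∩ (t ∩ {q | q ∈ V → (φ q = 0 ∧ G q = 0)}) ⊆ {x ∈ t | F x = F p} := by
    rintro q ⟨hqV, hqt, hq0⟩
    obtain ⟨e1, e2⟩ := hq0 hqV
    exact ⟨hqt, by simp [hF_def, e1, e2, hφ0, hG0]⟩
  calc dimH _ ≤ dimH {x ∈ t | F x = F p} := dimH_mono hss
    _ ≤ (finrank ℝ (F'.ker) : ℝ≥0∞) := hdim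
    _ = ((n - 2 : ℕ) : ℝ≥0∞) := by rw [hrank.1]
    _ = (n : ℝ≥0∞) - 2 := by
        rw [ENNReal.natCast_sub]
        norm_num

/-- Refinement of Derridj's lemma: for a C² hypersurface Σ ⊆ ℝⁿ and smooth
vector fields X, Y, the set of points of Σ where X and Y are tangent to Σ but
[X,Y] is not has Hausdorff dimension at most n − 2. -/
theorem dimH_tangent_bracket_nontangent_le
    (n : ℕ) (S : Set (EuclideanSpace ℝ (Fin n)))
    (hS : ∀ p ∈ S, ∃ U φ, IsLocalDefiningFn S U φ p)
    (X Y : EuclideanSpace ℝ (Fin n) → EuclideanSpace ℝ (Fin n))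
    (hX : ContDiff ℝ (⊤ : ℕ∞) X) (hY : ContDiff ℝ (⊤ : ℕ∞) Y) :
    dimH {p | p ∈ S ∧ ∀ U φ, IsLocalDefiningFn S U φ p →
        (fderiv ℝ φ p (X p) = 0 ∧ fderiv ℝ φ p (Y p) = 0 ∧
          fderiv ℝ φ p (vecLieBracket X Y p) ≠ 0)}
      ≤ (n : ℝ≥0∞) - 2 := by
  set V := {p | p ∈ S ∧ ∀ U φ, IsLocalDefiningFn S U φ p →
        (fderiv ℝ φ p (X p) = 0 ∧ fderiv ℝ φ p (Y p) = 0 ∧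
          fderiv ℝ φ p (vecLieBracket X Y p) ≠ 0)} with hV_def
  by_contra hcon
  rw [not_le] at hcon
  obtain ⟨p, hpV, hp⟩ := exists_mem_nhdsWithin_lt_dimH_of_lt_dimH hcon
  suffices hloc : ∃ t ∈ nhdsWithin p V, dimH t ≤ (n : ℝ≥0∞) - 2 by
    obtain ⟨t, htm, htd⟩ := hloc
    exact absurd htd (not_le.2 (hp t htm))
  obtain ⟨hpS, hpall⟩ := hpV
  obtain ⟨U, φ, hU, hφ, hziff, hdne⟩ := hS p hpS
  obtain ⟨U₀, hU₀sub, hU₀open, hpU₀⟩ := mem_nhds_iff.1 hU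
  have hdef₀ : ∀ q ∈ U₀, IsLocalDefiningFn S U₀ φ q := fun q hq =>
    ⟨hU₀open.mem_nhds hq, hφ, fun r hr => hziff r (hU₀sub hr), fun r hr => hdne r (hU₀sub hr)⟩
  obtain ⟨hXp, hYp, hbr⟩ := hpall U₀ φ (hdef₀ p hpU₀)
  -- the two auxiliary scalar functions
  set Xφ : EuclideanSpace ℝ (Fin n) → ℝ := fun q => fderiv ℝ φ q (X q) with hXφ_def
  set Yφ : EuclideanSpace ℝ (Fin n) → ℝ := fun q => fderiv ℝ φ q (Y q) with hYφ_def
  have hφ1 : ContDiff ℝ 1 (fderiv ℝ φ) := hφ.fderiv_right (by norm_num)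
  have hXφ1 : ContDiff ℝ 1 Xφ := hφ1.clm_apply (hX.of_le (by simp))
  have hYφ1 : ContDiff ℝ 1 Yφ := hφ1.clm_apply (hY.of_le (by simp))
  -- derivatives
  have hH : HasFDerivAt (fderiv ℝ φ) (fderiv ℝ (fderiv ℝ φ) p) p :=
    (hφ1.differentiable one_ne_zero p).hasFDerivAt
  have hXd : HasFDerivAt X (fderiv ℝ X p) p :=
    ((hX.of_le (by simp)).differentiable one_ne_zero p).hasFDerivAt
  have hYd : HasFDerivAt Y (fderiv ℝ Y p) p :=
    ((hY.of_le (by simp)).differentiable one_ne_zero p).hasFDerivAt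
  have hA : HasFDerivAt Xφ
      ((fderiv ℝ φ p).comp (fderiv ℝ X p) + (fderiv ℝ (fderiv ℝ φ) p).flip (X p)) p :=
    hH.clm_apply hXd
  have hB : HasFDerivAt Yφ
      ((fderiv ℝ φ p).comp (fderiv ℝ Y p) + (fderiv ℝ (fderiv ℝ φ) p).flip (Y p)) p :=
    hH.clm_apply hYd
  have hsym : fderiv ℝ (fderiv ℝ φ) p (X p) (Y p) = fderiv ℝ (fderiv ℝ φ) p (Y p) (X p) :=
    (hφ.contDiffAt.isSymmSndFDerivAt (by simp)) (X p) (Y p)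
  have key : fderiv ℝ Yφ p (X p) - fderiv ℝ Xφ p (Y p)
      = fderiv ℝ φ p (vecLieBracket X Y p) := by
    rw [hA.fderiv, hB.fderiv]
    simp only [ContinuousLinearMap.add_apply, ContinuousLinearMap.comp_apply,
      ContinuousLinearMap.flip_apply, vecLieBracket, map_sub]
    rw [hsym]
    ring
  have hne : fderiv ℝ Xφ p (Y p) ≠ 0 ∨ fderiv ℝ Yφ p (X p) ≠ 0 := by
    by_contra hc
    push_neg at hc
    rw [hc.1, hc.2, sub_zero] at key
    exact hbr key.symm
  -- a vector where dφ(p) doesn't vanish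
  have hdnep : fderiv ℝ φ p ≠ 0 := hdne p (hU₀sub hpU₀)
  have hv : ∃ v, fderiv ℝ φ p v ≠ 0 := by
    by_contra hc
    push_neg at hc
    exact hdnep (ContinuousLinearMap.ext fun v => hc v)
  obtain ⟨v, hv⟩ := hv
  have hφ0 : φ p = 0 := (hziff p (hU₀sub hpU₀)).1 hpS
  rcases hne with h3 | h3
  · -- use G = Xφ, w = Y p
    refine aux_main ((hφ.of_le one_le_two).contDiffAt) hXφ1.contDiffAt hv hYp h3 ?_ hφ0 hXp
    filter_upwards [hU₀open.mem_nhds hpU₀] with q hq hqV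
    exact ⟨(hziff q (hU₀sub hq)).1 hqV.1, (hqV.2 U₀ φ (hdef₀ q hq)).1⟩
  · -- use G = Yφ, w = X p
    refine aux_main ((hφ.of_le one_le_two).contDiffAt) hYφ1.contDiffAt hv hXp h3 ?_ hφ0 hYp
    filter_upwards [hU₀open.mem_nhds hpU₀] with q hq hqV
    exact ⟨(hziff q (hU₀sub hq)).1 hqV.1, (hqV.2 U₀ φ (hdef₀ q hq)).2.1⟩
end

section
/- Let X₁,…,X_k be smooth vector fields on ℝⁿ that bracket generate the tangent space at every point (Hörmander's condition). Then for any C² hypersurface Σ ⊂ ℝⁿ, the characteristic set C(Σ) = {p ∈ Σ : (X_j)|_p ∈ T_pΣ for all 1 ≤ j ≤ k} has Hausdorff dimension at most n − 2. -/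
open scoped ENNReal
open Set Filter Module Topology

/-- The vector fields obtained from `X 0, …, X (k-1)` by iterated Lie brackets. -/
inductive IsIterBracket {n k : ℕ}
    (X : Fin k → EuclideanSpace ℝ (Fin n) → EuclideanSpace ℝ (Fin n)) :
    (EuclideanSpace ℝ (Fin n) → EuclideanSpace ℝ (Fin n)) → Prop
  | base (j : Fin k) : IsIterBracket X (X j)
  | bracket {Y Z} : IsIterBracket X Y → IsIterBracket X Z →
      IsIterBracket X (vecLieBracket Y Z)

open Topology in
/-- Abbreviation for Euclidean space. -/
abbrev ES (n : ℕ) : Type := EuclideanSpace ℝ (Fin n)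

/-- Binary bracket trees: a countable enumeration of iterated bracket expressions. -/
inductive BTree (k : ℕ) where
  | leaf : Fin k → BTree k
  | node : BTree k → BTree k → BTree k

namespace BTree

variable {n k : ℕ}

def code : BTree k → ℕ
  | leaf j => 2 * j
  | node a b => 2 * Nat.pair a.code b.code + 1

theorem code_injective : Function.Injective (code (k := k)) := by
  intro a
  induction a with
  | leaf j =>
    intro b hb
    cases b with
    | leaf i =>
      simp only [code] at hb
      have : (j : ℕ) = i := by omega
      exact congrArg leaf (Fin.ext this).symm |>.symm
    | node u v => simp only [code] at hb; omega
  | node x y ihx ihy =>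
    intro b hb
    cases b with
    | leaf i => simp only [code] at hb; omega
    | node u v =>
      simp only [code] at hb
      have h2 : Nat.pair x.code y.code = Nat.pair u.code v.code := by omega
      obtain ⟨h3, h4⟩ := Nat.pair_eq_pair.mp h2
      rw [ihx h3, ihy h4]

instance : Countable (BTree k) := (countable_iff_exists_injective _).2 ⟨code, code_injective⟩

noncomputable def eval (X : Fin k → ES n → ES n) : BTree k → ES n → ES n
  | leaf j => X j
  | node a b => vecLieBracket (eval X a) (eval X b)

theorem contDiff_vecLieBracket {Y Z : ES n → ES n} (hY : ContDiff ℝ (⊤ : ℕ∞) Y)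
    (hZ : ContDiff ℝ (⊤ : ℕ∞) Z) : ContDiff ℝ (⊤ : ℕ∞) (vecLieBracket Y Z) := by
  unfold vecLieBracket
  exact ((hZ.fderiv_right (by simp)).clm_apply hY).sub ((hY.fderiv_right (by simp)).clm_apply hZ)

theorem contDiff_eval {X : Fin k → ES n → ES n} (hX : ∀ j, ContDiff ℝ (⊤ : ℕ∞) (X j)) :
    ∀ t : BTree k, ContDiff ℝ (⊤ : ℕ∞) (eval X t)
  | leaf j => hX j
  | node a b => contDiff_vecLieBracket (contDiff_eval hX a) (contDiff_eval hX b)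

theorem exists_eval {X : Fin k → ES n → ES n} {Z : ES n → ES n}
    (h : IsIterBracket X Z) : ∃ t : BTree k, eval X t = Z := by
  induction h with
  | base j => exact ⟨leaf j, rfl⟩
  | bracket hY hZ ihY ihZ =>
    obtain ⟨a, rfl⟩ := ihY
    obtain ⟨b, rfl⟩ := ihZ
    exact ⟨node a b, rfl⟩

end BTree

/-- Local-to-global lemma for Hausdorff dimension bounds. -/
theorem dimH_le_of_locally {n : ℕ} {A : Set (ES n)} {d : ℝ≥0∞}
    (h : ∀ p ∈ A, ∃ V ∈ 𝓝 p, dimH (A ∩ V) ≤ d) : dimH A ≤ d := by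
  choose! V hV hdim using h
  obtain ⟨t, hts, htc, hcov⟩ := TopologicalSpace.countable_cover_nhdsWithin
    (f := fun p => A ∩ V p) (s := A)
    (fun x hx => inter_mem_nhdsWithin A (hV x hx))
  calc dimH A ≤ dimH (⋃ x ∈ t, A ∩ V x) := dimH_mono hcov
    _ = ⨆ x ∈ t, dimH (A ∩ V x) := dimH_bUnion htc _
    _ ≤ d := iSup₂_le fun x hx => hdim x (hts hx)

theorem exists_apply_ne_zero {n : ℕ} {f' : ES n →L[ℝ] ℝ} (h : f' ≠ 0) :
    ∃ w, f' w ≠ 0 := by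
  by_contra hw
  push_neg at hw
  exact h (ContinuousLinearMap.ext fun x => by simp [hw x])

theorem range_top_of_ne_zero {n : ℕ} {f' : ES n →L[ℝ] ℝ} (h : f' ≠ 0) :
    f'.range = ⊤ := by
  obtain ⟨w, hw⟩ := exists_apply_ne_zero h
  rw [LinearMap.range_eq_top]
  intro c
  exact ⟨(c / f' w) • w, by simp [smul_eq_mul, div_mul_cancel₀ c hw]⟩

theorem range_top_of_pair {n : ℕ} {f' g' : ES n →L[ℝ] ℝ} {u w : ES n}
    (hfw : f' w ≠ 0) (hfu : f' u = 0) (hgu : g' u ≠ 0) :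
    (f'.prod g').range = ⊤ := by
  rw [LinearMap.range_eq_top]
  intro c
  refine ⟨(c.1 / f' w) • w + ((c.2 - (c.1 / f' w) * g' w) / g' u) • u, ?_⟩
  have h1 : f' ((c.1 / f' w) • w + ((c.2 - (c.1 / f' w) * g' w) / g' u) • u) = c.1 := by
    rw [map_add, map_smul, map_smul, hfu, smul_zero, add_zero, smul_eq_mul,
      div_mul_cancel₀ _ hfw]
  have h2 : g' ((c.1 / f' w) • w + ((c.2 - (c.1 / f' w) * g' w) / g' u) • u) = c.2 := by
    rw [map_add, map_smul, map_smul, smul_eq_mul, smul_eq_mul, div_mul_cancel₀ _ hgu]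
    ring
  simp [ContinuousLinearMap.prod_apply, h1, h2]

/-- A joint level set of two functions whose differentials at `p` are "independent"
(witnessed by a vector `u` in the kernel of one but not the other) has Hausdorff
dimension at most `n - 2` near `p`. -/
theorem dimH_pair_level_le {n : ℕ} {f g : ES n → ℝ} {p u : ES n}
    (hf : ContDiff ℝ 1 f) (hg : ContDiff ℝ 1 g)
    (hfu : fderiv ℝ f p u = 0) (hgu : fderiv ℝ g p u ≠ 0) (hfp : fderiv ℝ f p ≠ 0) :
    ∃ V ∈ 𝓝 p, dimH ({x | f x = f p ∧ g x = g p} ∩ V) ≤ (n : ℝ≥0∞) - 2 := by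
  obtain ⟨w, hfw⟩ := exists_apply_ne_zero hfp
  set F : ES n → ℝ × ℝ := fun x => (f x, g x) with hFdef
  set F' := (fderiv ℝ f p).prod (fderiv ℝ g p) with hF'def
  have hF : HasStrictFDerivAt F F' p :=
    (hf.contDiffAt.hasStrictFDerivAt one_ne_zero).prodMk (hg.contDiffAt.hasStrictFDerivAt one_ne_zero)
  have hsurj : F'.range = ⊤ := range_top_of_pair hfw hfu hgu
  have hrank : finrank ℝ F'.ker + 2 = n := by
    have h1 := LinearMap.finrank_range_add_finrank_ker (F' : ES n →ₗ[ℝ] ℝ × ℝ)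
    have h2 : LinearMap.range (F' : ES n →ₗ[ℝ] ℝ × ℝ) = ⊤ := hsurj
    have h3 : LinearMap.ker (F' : ES n →ₗ[ℝ] ℝ × ℝ) = F'.ker := rfl
    rw [h2, h3, finrank_top, finrank_euclideanSpace_fin] at h1
    have h4 : finrank ℝ (ℝ × ℝ) = 2 := by
      simp [Module.finrank_prod]
    omega
  set ψ := HasStrictFDerivAt.implicitFunction F F' hF hsurj (F p) with hψdef
  have hψ0 : HasStrictFDerivAt ψ F'.ker.subtypeL 0 := hF.to_implicitFunction hsurj
  obtain ⟨K, s, hs, hlip⟩ := hψ0.exists_lipschitzOnWith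
  set e := HasStrictFDerivAt.implicitToOpenPartialHomeomorph F F' hF hsurj with hedef
  have hsource : p ∈ e.source := hF.mem_implicitToOpenPartialHomeomorph_source hsurj
  have hz : Tendsto (fun x => (e x).2) (𝓝 p) (𝓝 0) := by
    have hc : ContinuousAt (fun x => (e x).2) p :=
      continuous_snd.continuousAt.comp (e.continuousAt hsource)
    have he0 : (e p).2 = 0 := by
      rw [hedef, hF.implicitToOpenPartialHomeomorph_self hsurj]
    rw [ContinuousAt] at hc
    simpa [he0] using hc
  have hev1 := hF.eq_implicitFunction hsurj
  have hev2 : ∀ᶠ x in 𝓝 p, (e x).2 ∈ s := hz.eventually hs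
  obtain ⟨V, hV, hVp⟩ := (hev1.and hev2).exists_mem
  refine ⟨V, hV, ?_⟩
  have hsub : {x | f x = f p ∧ g x = g p} ∩ V ⊆ ψ '' s := by
    rintro x ⟨⟨hfx, hgx⟩, hxV⟩
    obtain ⟨h1, h2⟩ := hVp x hxV
    have hFx : F x = F p := by
      simp only [hFdef, hfx, hgx]
    refine ⟨(e x).2, h2, ?_⟩
    rw [hψdef, ← hFx]
    exact h1
  have h2n : 2 ≤ n := by omega
  calc dimH ({x | f x = f p ∧ g x = g p} ∩ V) ≤ dimH (ψ '' s) := dimH_mono hsub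
    _ ≤ dimH s := hlip.dimH_image_le
    _ ≤ dimH (univ : Set ↥F'.ker) := dimH_mono (subset_univ s)
    _ = finrank ℝ ↥F'.ker := Real.dimH_univ_eq_finrank _
    _ = ((n - 2 : ℕ) : ℝ≥0∞) := by norm_cast; omega
    _ = (n : ℝ≥0∞) - 2 := by
        rw [ENNReal.natCast_sub]
        norm_num

/-- The tangency condition is independent of the choice of defining function:
if `v` is killed by the differential of one defining function at `q ∈ S`, it is
killed by the differential of any other. Proved via the implicit function theorem. -/
theorem fderiv_eq_zero_of_defining {n : ℕ} {S U U' : Set (ES n)} {φ ψ : ES n → ℝ}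
    {q : ES n} (hqS : q ∈ S) (hφ : IsLocalDefiningFn S U φ q)
    (hψ : IsLocalDefiningFn S U' ψ q) {v : ES n}
    (hv : fderiv ℝ φ q v = 0) : fderiv ℝ ψ q v = 0 := by
  obtain ⟨hU, hφ2, hφS, hφd⟩ := hφ
  obtain ⟨hU', hψ2, hψS, hψd⟩ := hψ
  have hqU : q ∈ U := mem_of_mem_nhds hU
  have hstrict : HasStrictFDerivAt φ (fderiv ℝ φ q) q :=
    hφ2.contDiffAt.hasStrictFDerivAt two_ne_zero
  have hne : fderiv ℝ φ q ≠ 0 := hφd q hqU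
  have hsurj : (fderiv ℝ φ q).range = ⊤ := range_top_of_ne_zero hne
  set Kr := (fderiv ℝ φ q).ker with hKdef
  set G : ↥Kr → ES n :=
    HasStrictFDerivAt.implicitFunction φ (fderiv ℝ φ q) hstrict hsurj (φ q) with hGdef
  have hG0 : G 0 = q := hstrict.implicitFunction_apply_image hsurj
  have hGd : HasStrictFDerivAt G Kr.subtypeL 0 := hstrict.to_implicitFunction hsurj
  have h1 : ∀ᶠ y : ↥Kr in 𝓝 0, φ (G y) = φ q := by
    have hmap : Tendsto (fun y : ↥Kr => ((φ q, y) : ℝ × ↥Kr)) (𝓝 0) (𝓝 (φ q, 0)) :=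
      (continuous_const.prodMk continuous_id).continuousAt
    exact hmap.eventually (hstrict.map_implicitFunction_eq hsurj)
  have h2 : ∀ᶠ y : ↥Kr in 𝓝 0, G y ∈ U ∩ U' := by
    have hcont : Tendsto G (𝓝 0) (𝓝 q) := by
      have := hstrict.tendsto_implicitFunction hsurj (l := 𝓝 (0 : ↥Kr))
        (g₁ := fun _ => φ q) (g₂ := id) tendsto_const_nhds tendsto_id
      simpa [hGdef] using this
    exact hcont.eventually (inter_mem hU hU')
  have hq0 : φ q = 0 := (hφS q hqU).mp hqS
  have h3 : (fun y => ψ (G y)) =ᶠ[𝓝 (0 : ↥Kr)] fun _ => 0 := by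
    filter_upwards [h1, h2] with y hy1 hy2
    have hGS : G y ∈ S := (hφS _ hy2.1).mpr (by rw [hy1, hq0])
    exact (hψS _ hy2.2).mp hGS
  have hψdiff : HasFDerivAt ψ (fderiv ℝ ψ q) q :=
    ((hψ2.differentiable two_ne_zero) q).hasFDerivAt
  have hcomp : HasFDerivAt (fun y => ψ (G y)) ((fderiv ℝ ψ q).comp Kr.subtypeL) 0 := by
    have hψdiff' : HasFDerivAt ψ (fderiv ℝ ψ q) (G 0) := hG0 ▸ hψdiff
    have := hψdiff'.comp (0 : ↥Kr) hGd.hasFDerivAt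
    exact this
  have hzero : HasFDerivAt (fun _ : ↥Kr => (0 : ℝ)) ((fderiv ℝ ψ q).comp Kr.subtypeL) 0 :=
    hcomp.congr_of_eventuallyEq h3.symm
  have hDeq : (fderiv ℝ ψ q).comp Kr.subtypeL = 0 := hzero.unique (hasFDerivAt_const 0 0)
  have hvK : v ∈ Kr := hv
  have := congrArg (fun (L : ↥Kr →L[ℝ] ℝ) => L ⟨v, hvK⟩) hDeq
  simpa using this

/-- The set of points of `S` where the iterated brackets `a` and `b` are tangent to `S`
but their bracket is not. -/
def ASet {n k : ℕ} (X : Fin k → ES n → ES n) (S : Set (ES n)) (a b : BTree k) :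
    Set (ES n) :=
  {q | q ∈ S ∧ ∃ U φ, IsLocalDefiningFn S U φ q ∧
    fderiv ℝ φ q (BTree.eval X a q) = 0 ∧ fderiv ℝ φ q (BTree.eval X b q) = 0 ∧
    fderiv ℝ φ q (BTree.eval X (BTree.node a b) q) ≠ 0}

theorem vecLieBracket_swap {n : ℕ} (Y Z : ES n → ES n) (q : ES n) :
    vecLieBracket Z Y q = -(vecLieBracket Y Z q) := by
  unfold vecLieBracket
  exact (neg_sub _ _).symm

theorem ASet_subset_swap {n k : ℕ} (X : Fin k → ES n → ES n) (S : Set (ES n))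
    (a b : BTree k) : ASet X S a b ⊆ ASet X S b a := by
  rintro q ⟨hqS, U, φ, hdef, ha, hb, hab⟩
  refine ⟨hqS, U, φ, hdef, hb, ha, ?_⟩
  show fderiv ℝ φ q (vecLieBracket (BTree.eval X b) (BTree.eval X a) q) ≠ 0
  rw [vecLieBracket_swap, map_neg, neg_ne_zero]
  exact hab

theorem ASet_symm {n k : ℕ} (X : Fin k → ES n → ES n) (S : Set (ES n))
    (a b : BTree k) : ASet X S a b = ASet X S b a :=
  Subset.antisymm (ASet_subset_swap X S a b) (ASet_subset_swap X S b a)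

/-- Local dimension bound at a point of `ASet`, in the case where the derivative of
`x ↦ dφ_x(eval b x)` does not vanish in the direction `eval a p`. -/
theorem dimH_ASet_inter_le {n k : ℕ} {X : Fin k → ES n → ES n}
    (hX : ∀ j, ContDiff ℝ (⊤ : ℕ∞) (X j)) {S : Set (ES n)} {a b : BTree k} {p : ES n}
    (hpS : p ∈ S) {U : Set (ES n)} {φ : ES n → ℝ} (hdef : IsLocalDefiningFn S U φ p)
    (ha : fderiv ℝ φ p (BTree.eval X a p) = 0)
    (hb : fderiv ℝ φ p (BTree.eval X b p) = 0)
    (hgu : fderiv ℝ (fun x => fderiv ℝ φ x (BTree.eval X b x)) p (BTree.eval X a p) ≠ 0) :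
    ∃ V ∈ 𝓝 p, dimH (ASet X S a b ∩ V) ≤ (n : ℝ≥0∞) - 2 := by
  obtain ⟨hU, hφ2, hφS, hφd⟩ := hdef
  have hpU : p ∈ U := mem_of_mem_nhds hU
  set g : ES n → ℝ := fun x => fderiv ℝ φ x (BTree.eval X b x) with hgdef
  have hg : ContDiff ℝ 1 g :=
    (hφ2.fderiv_right (by norm_num)).clm_apply ((BTree.contDiff_eval hX b).of_le (by simp))
  obtain ⟨V₁, hV₁, hdim⟩ := dimH_pair_level_le (hφ2.of_le (by norm_num)) hg ha hgu
    (hφd p hpU)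
  refine ⟨V₁ ∩ interior U, inter_mem hV₁ (interior_mem_nhds.mpr hU), ?_⟩
  have hφp : φ p = 0 := (hφS p hpU).mp hpS
  have hsub : ASet X S a b ∩ (V₁ ∩ interior U) ⊆ {x | φ x = φ p ∧ g x = g p} ∩ V₁ := by
    rintro q ⟨⟨hqS, Uq, φq, hdefq, -, hbq, -⟩, hqV₁, hqint⟩
    have hdefφ : IsLocalDefiningFn S U φ q :=
      ⟨mem_interior_iff_mem_nhds.mp hqint, hφ2, hφS, hφd⟩
    refine ⟨⟨?_, ?_⟩, hqV₁⟩
    · rw [hφp]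
      exact (hφS q (interior_subset hqint)).mp hqS
    · show g q = g p
      have hq0 : g q = 0 := fderiv_eq_zero_of_defining hqS hdefq hdefφ hbq
      have hp0 : g p = 0 := hb
      rw [hq0, hp0]
  exact le_trans (dimH_mono hsub) hdim

/-- The key identity: the difference of directional derivatives of the two tangency
functions equals the pairing of `dφ` with the Lie bracket. -/
theorem bracket_pairing_identity {n : ℕ} {φ : ES n → ℝ} (hφ2 : ContDiff ℝ 2 φ)
    {Y Z : ES n → ES n} (hY : ContDiff ℝ (⊤ : ℕ∞) Y) (hZ : ContDiff ℝ (⊤ : ℕ∞) Z) (p : ES n) :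
    fderiv ℝ (fun x => fderiv ℝ φ x (Z x)) p (Y p)
      - fderiv ℝ (fun x => fderiv ℝ φ x (Y x)) p (Z p)
      = fderiv ℝ φ p (vecLieBracket Y Z p) := by
  have hφ1 : ContDiff ℝ 1 (fderiv ℝ φ) := hφ2.fderiv_right (by norm_num)
  have hder : ∀ (W : ES n → ES n), ContDiff ℝ (⊤ : ℕ∞) W → ∀ v : ES n,
      fderiv ℝ (fun x => fderiv ℝ φ x (W x)) p v
        = fderiv ℝ φ p (fderiv ℝ W p v) + fderiv ℝ (fderiv ℝ φ) p v (W p) := by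
    intro W hW v
    rw [fderiv_clm_apply ((hφ1.differentiable one_ne_zero) p) ((hW.differentiable (by simp)) p)]
    simp
  have hsym : fderiv ℝ (fderiv ℝ φ) p (Y p) (Z p)
      = fderiv ℝ (fderiv ℝ φ) p (Z p) (Y p) :=
    (hφ2.contDiffAt.isSymmSndFDerivAt (by simp)) _ _
  rw [hder Z hZ (Y p), hder Y hY (Z p), hsym]
  show _ = fderiv ℝ φ p (fderiv ℝ Z p (Y p) - fderiv ℝ Y p (Z p))
  rw [map_sub]
  ring

/-- Each pair's bad set has Hausdorff dimension at most `n - 2`. -/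
theorem dimH_ASet_le {n k : ℕ} {X : Fin k → ES n → ES n}
    (hX : ∀ j, ContDiff ℝ (⊤ : ℕ∞) (X j)) (S : Set (ES n)) (a b : BTree k) :
    dimH (ASet X S a b) ≤ (n : ℝ≥0∞) - 2 := by
  apply dimH_le_of_locally
  rintro p ⟨hpS, U, φ, hdef, ha, hb, hab⟩
  have hkey := bracket_pairing_identity hdef.2.1 (BTree.contDiff_eval hX a)
    (BTree.contDiff_eval hX b) p
  have hcases : fderiv ℝ (fun x => fderiv ℝ φ x (BTree.eval X b x)) p (BTree.eval X a p) ≠ 0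
      ∨ fderiv ℝ (fun x => fderiv ℝ φ x (BTree.eval X a x)) p (BTree.eval X b p) ≠ 0 := by
    by_contra h
    push_neg at h
    obtain ⟨h1, h2⟩ := h
    apply hab
    show fderiv ℝ φ p (vecLieBracket (BTree.eval X a) (BTree.eval X b) p) = 0
    rw [← hkey, h1, h2, sub_zero]
  rcases hcases with hc | hc
  · exact dimH_ASet_inter_le hX hpS hdef ha hb hc
  · rw [ASet_symm]
    exact dimH_ASet_inter_le hX hpS hdef hb ha hc

/-- If smooth vector fields X₁,…,X_k on ℝⁿ bracket generate at every point,
then the characteristic set of any C² hypersurface Σ has Hausdorff dimension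
at most n − 2. -/
theorem dimH_characteristic_set_le
    (n k : ℕ)
    (X : Fin k → EuclideanSpace ℝ (Fin n) → EuclideanSpace ℝ (Fin n))
    (hX : ∀ j, ContDiff ℝ (⊤ : ℕ∞) (X j))
    (hgen : ∀ p, Submodule.span ℝ
        {v : EuclideanSpace ℝ (Fin n) | ∃ Z, IsIterBracket X Z ∧ Z p = v} = ⊤)
    (S : Set (EuclideanSpace ℝ (Fin n)))
    (hS : ∀ p ∈ S, ∃ U φ, IsLocalDefiningFn S U φ p) :
    dimH {p | p ∈ S ∧ ∀ U φ, IsLocalDefiningFn S U φ p →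
        ∀ j, fderiv ℝ φ p (X j p) = 0}
      ≤ (n : ℝ≥0∞) - 2 := by
  have hcov : {p | p ∈ S ∧ ∀ U φ, IsLocalDefiningFn S U φ p →
      ∀ j, fderiv ℝ φ p (X j p) = 0}
      ⊆ ⋃ ab : BTree k × BTree k, ASet X S ab.1 ab.2 := by
    rintro p ⟨hpS, hchar⟩
    obtain ⟨U, φ, hdef⟩ := hS p hpS
    have hφd : fderiv ℝ φ p ≠ 0 := hdef.2.2.2 p (mem_of_mem_nhds hdef.1)
    have hXj : ∀ j, fderiv ℝ φ p (X j p) = 0 := hchar U φ hdef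
    have hex : ∃ t : BTree k, fderiv ℝ φ p (BTree.eval X t p) ≠ 0 := by
      by_contra h
      push_neg at h
      apply hφd
      have hspan : Submodule.span ℝ {v | ∃ Z, IsIterBracket X Z ∧ Z p = v}
          ≤ (fderiv ℝ φ p).ker := by
        rw [Submodule.span_le]
        rintro v ⟨Z, hZ, rfl⟩
        obtain ⟨t, rfl⟩ := BTree.exists_eval hZ
        exact h t
      rw [hgen p] at hspan
      ext v
      simpa using hspan (Submodule.mem_top (x := v))
    obtain ⟨t, ht⟩ := hex
    have descend : ∀ t : BTree k, fderiv ℝ φ p (BTree.eval X t p) ≠ 0 →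
        ∃ a b : BTree k, fderiv ℝ φ p (BTree.eval X a p) = 0 ∧
          fderiv ℝ φ p (BTree.eval X b p) = 0 ∧
          fderiv ℝ φ p (BTree.eval X (BTree.node a b) p) ≠ 0 := by
      intro t
      induction t with
      | leaf j => intro ht'; exact absurd (hXj j) ht'
      | node a b iha ihb =>
        intro ht'
        by_cases h1 : fderiv ℝ φ p (BTree.eval X a p) = 0
        · by_cases h2 : fderiv ℝ φ p (BTree.eval X b p) = 0
          · exact ⟨a, b, h1, h2, ht'⟩
          · exact ihb h2
        · exact iha h1
    obtain ⟨a, b, ha, hb, hab⟩ := descend t ht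
    exact mem_iUnion.2 ⟨(a, b), hpS, U, φ, hdef, ha, hb, hab⟩
  calc dimH {p | p ∈ S ∧ ∀ U φ, IsLocalDefiningFn S U φ p →
        ∀ j, fderiv ℝ φ p (X j p) = 0}
      ≤ dimH (⋃ ab : BTree k × BTree k, ASet X S ab.1 ab.2) := dimH_mono hcov
    _ = ⨆ ab : BTree k × BTree k, dimH (ASet X S ab.1 ab.2) := dimH_iUnion _
    _ ≤ (n : ℝ≥0∞) - 2 := iSup_le fun ab => dimH_ASet_le hX S ab.1 ab.2
end

section
/- Let n > k ≥ 2 and define vector fields on ℝⁿ by X_j = ∂/∂x^j for 1 ≤ j ≤ k−1 and X_k = ∂/∂x^k + x¹ ∂/∂x^{k+1} + (x¹)² ∂/∂x^{k+2} + ⋯ + (x¹)^{n−k} ∂/∂x^n. Then: (a) these vector fields bracket generate T_pℝⁿ at every point p; and (b) for the smooth hypersurface Σ = {x^n = (x¹)²}, the set {x ∈ Σ : x^n = x¹ = 0} is contained in the characteristic set C(Σ), so C(Σ) has Hausdorff dimension at least n − 2. -/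
open scoped ENNReal

/-- The model vector fields: X_j = ∂_{x^j} for j ≤ k−1 and
X_k = ∂_{x^k} + x¹∂_{x^{k+1}} + (x¹)²∂_{x^{k+2}} + ⋯ + (x¹)^{n−k}∂_{x^n}
(here 0-indexed: coordinate `i` of ℝⁿ is x^{i+1}). -/
noncomputable def sharpX (n k : ℕ) (hkn : k < n) (hn : 0 < n) (j : Fin k)
    (p : EuclideanSpace ℝ (Fin n)) : EuclideanSpace ℝ (Fin n) :=
  if (j : ℕ) + 1 = k then
    EuclideanSpace.single (Fin.castLE hkn.le j) (1 : ℝ) +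
      ∑ i : Fin n, (if k ≤ (i : ℕ) then
        ((p ⟨0, hn⟩) ^ ((i : ℕ) - k + 1)) • EuclideanSpace.single i (1 : ℝ)
        else 0)
  else EuclideanSpace.single (Fin.castLE hkn.le j) (1 : ℝ)

/-! Write `X_k = ∂_k + γ(x¹)` with the moment curve `γ(t) = ∑_{i > k} t^{i-k} e_i`. Since
`X_1 = ∂_1` is constant, bracketing with it differentiates in `x¹`, so the iterated brackets
`ad(X_1)^m X_k` are the fields `γ^{(m)}(x¹)`. At any point the vector `γ^{(i-k)}(t)` has `i`-th
coordinate `(i-k)!` and no lower coordinates, so these vectors span `e_{k+1}, …, e_n`;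
with `X_1, …, X_{k-1}` and `X_k - γ(x¹)` they span `ℝⁿ`. On `{x^n = x¹ = 0}` every `X_j` is a
coordinate field `e_j` with `j < n`, which `d(x^n - (x¹)²) = dx^n` annihilates there; that set is
a linear subspace of codimension 2, hence of Hausdorff dimension `n - 2`. -/

open Module

section Coordinates

variable {𝕜 ι : Type*} [RCLike 𝕜] [Fintype ι] [DecidableEq ι]

theorem EuclideanSpace.mem_of_forall_single_mem {W : Submodule 𝕜 (EuclideanSpace 𝕜 ι)}
    (x : EuclideanSpace 𝕜 ι) (h : ∀ i, x i ≠ 0 → EuclideanSpace.single i 1 ∈ W) : x ∈ W := by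
  rw [← (EuclideanSpace.basisFun ι 𝕜).sum_repr x]
  refine W.sum_mem fun i _ => ?_
  by_cases hi : x i = 0
  · simp [hi]
  · simpa using W.smul_mem (x i) (h i hi)

theorem EuclideanSpace.single_mem_of_triangular [LinearOrder ι]
    {W : Submodule 𝕜 (EuclideanSpace 𝕜 ι)} {i₀ : ι} (v : ι → EuclideanSpace 𝕜 ι)
    (hv : ∀ i, i₀ ≤ i → v i ∈ W) (hdiag : ∀ i, i₀ ≤ i → v i i ≠ 0)
    (hlower : ∀ i j, i₀ ≤ i → j < i → v i j = 0) :
    ∀ i, i₀ ≤ i → EuclideanSpace.single i 1 ∈ W := by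
  intro i
  induction i using WellFoundedGT.induction with
  | _ i ih =>
  intro hi
  have hrest : v i - v i i • EuclideanSpace.single i 1 ∈ W := by
    refine mem_of_forall_single_mem _ fun j hj => ?_
    rcases lt_trichotomy j i with hji | rfl | hij
    · simp [hlower i j hi hji, hji.ne] at hj
    · simp at hj
    · exact ih j hij (hi.trans hij.le)
  have := W.smul_mem (v i i)⁻¹ (W.sub_mem (hv i hi) hrest)
  rwa [sub_sub_cancel, smul_smul, inv_mul_cancel₀ (hdiag i hi), one_smul] at this

end Coordinates

theorem Submodule.dimH_coe_eq_finrank {E : Type*} [NormedAddCommGroup E] [NormedSpace ℝ E]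
    [FiniteDimensional ℝ E] (W : Submodule ℝ E) : dimH (W : Set E) = finrank ℝ W := by
  rw [← Real.dimH_univ_eq_finrank, ← W.subtypeₗᵢ.isometry.dimH_image, Set.image_univ]
  simp

theorem LinearMap.le_dimH_ker {E F : Type*} [NormedAddCommGroup E] [NormedSpace ℝ E]
    [FiniteDimensional ℝ E] [AddCommGroup F] [Module ℝ F] [FiniteDimensional ℝ F]
    (f : E →ₗ[ℝ] F) : (finrank ℝ E : ℝ≥0∞) - finrank ℝ F ≤ dimH (LinearMap.ker f : Set E) := by
  rw [Submodule.dimH_coe_eq_finrank, ← f.finrank_range_add_finrank_ker, tsub_le_iff_right,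
    ← Nat.cast_add, add_comm, Nat.cast_le]
  exact Nat.add_le_add_left (Submodule.finrank_le _) _

theorem EuclideanSpace.le_dimH_setOf_apply_eq_zero {ι : Type*} [Fintype ι] (a b : ι) :
    (Fintype.card ι : ℝ≥0∞) - 2 ≤ dimH {p : EuclideanSpace ℝ ι | p a = 0 ∧ p b = 0} := by
  let f : EuclideanSpace ℝ ι →ₗ[ℝ] ℝ × ℝ :=
    (EuclideanSpace.proj a).toLinearMap.prod (EuclideanSpace.proj b).toLinearMap
  have hker : {p : EuclideanSpace ℝ ι | p a = 0 ∧ p b = 0} = LinearMap.ker f := by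
    ext p; simp [f]
  simpa [hker, finrank_euclideanSpace] using f.le_dimH_ker

theorem vecLieBracket_const_left {n : ℕ} (v : EuclideanSpace ℝ (Fin n))
    (Y : EuclideanSpace ℝ (Fin n) → EuclideanSpace ℝ (Fin n)) :
    vecLieBracket (fun _ => v) Y = fun p => fderiv ℝ Y p v := by
  funext p
  simp [vecLieBracket]

theorem vecLieBracket_single_const_add_comp {n : ℕ} (i : Fin n) (w : EuclideanSpace ℝ (Fin n))
    {f : ℝ → EuclideanSpace ℝ (Fin n)} (hf : Differentiable ℝ f) :
    vecLieBracket (fun _ => EuclideanSpace.single i 1) (fun p => w + f (p i)) =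
      fun p => deriv f (p i) := by
  rw [vecLieBracket_const_left]
  funext p
  have hcoord := (EuclideanSpace.proj i : EuclideanSpace ℝ (Fin n) →L[ℝ] ℝ).hasFDerivAt (x := p)
  have hcomp : HasFDerivAt (fun q : EuclideanSpace ℝ (Fin n) => f (q i))
      ((fderiv ℝ f (p i)).comp (EuclideanSpace.proj i)) p :=
    (hf (p i)).hasFDerivAt.comp p hcoord
  rw [fderiv_const_add, hcomp.fderiv]
  simp

theorem EuclideanSpace.fderiv_apply_sub_apply_sq {ι : Type*} [Fintype ι] (a b : ι)
    (p v : EuclideanSpace ℝ ι) :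
    fderiv ℝ (fun q : EuclideanSpace ℝ ι => q a - q b ^ 2) p v = v a - 2 * p b * v b := by
  have hproj (i : ι) := (EuclideanSpace.proj i : EuclideanSpace ℝ ι →L[ℝ] ℝ).hasFDerivAt (x := p)
  have hderiv : HasFDerivAt (fun q : EuclideanSpace ℝ ι => q a - q b ^ 2)
      (EuclideanSpace.proj (𝕜 := ℝ) a - (2 * p b) • EuclideanSpace.proj b) p := by
    simpa using (hproj a).fun_sub ((hproj b).pow 2)
  rw [hderiv.fderiv]
  simp [mul_assoc]

noncomputable def momentCurve (n k : ℕ) (t : ℝ) : EuclideanSpace ℝ (Fin n) :=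
  ∑ i : Fin n, if k ≤ (i : ℕ) then t ^ ((i : ℕ) - k + 1) • EuclideanSpace.single i (1 : ℝ) else 0

theorem momentCurve_zero (n k : ℕ) : momentCurve n k 0 = 0 := by
  simp [momentCurve]

theorem contDiff_momentCurve (n k : ℕ) : ContDiff ℝ ⊤ (momentCurve n k) := by
  unfold momentCurve
  refine ContDiff.sum fun i _ => ?_
  split_ifs <;> fun_prop

theorem iteratedDeriv_momentCurve_apply (n k m : ℕ) (t : ℝ) (i : Fin n) :
    iteratedDeriv m (momentCurve n k) t i =
      if k ≤ (i : ℕ) then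
        ((((i : ℕ) - k + 1).descFactorial m : ℕ) : ℝ) * t ^ ((i : ℕ) - k + 1 - m)
      else 0 := by
  have hterm : ∀ j : Fin n, iteratedDeriv m (fun s : ℝ => if k ≤ (j : ℕ) then
      s ^ ((j : ℕ) - k + 1) • EuclideanSpace.single j (1 : ℝ) else 0) t =
      if k ≤ (j : ℕ) then
        (((((j : ℕ) - k + 1).descFactorial m : ℕ) : ℝ) * t ^ ((j : ℕ) - k + 1 - m)) •
          EuclideanSpace.single j (1 : ℝ)
      else 0 := by
    intro j
    split_ifs
    · rw [iteratedDeriv_smul_const (by fun_prop), iteratedDeriv_pow]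
    · simp
  unfold momentCurve
  rw [iteratedDeriv_fun_sum fun j _ => by split_ifs <;> fun_prop]
  simp only [hterm, WithLp.ofLp_sum, Finset.sum_apply]
  rw [Finset.sum_eq_single i (fun j _ hji => by split_ifs <;> simp [hji.symm]) (by simp)]
  split_ifs <;> simp

section SharpExample

variable {n k : ℕ} (hkn : k < n) (hn : 0 < n)

theorem sharpX_of_ne {j : Fin k} (h : (j : ℕ) + 1 ≠ k) :
    sharpX n k hkn hn j = fun _ => EuclideanSpace.single (Fin.castLE hkn.le j) 1 := by
  funext p
  simp [sharpX, h]

theorem sharpX_of_eq {j : Fin k} (h : (j : ℕ) + 1 = k) :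
    sharpX n k hkn hn j = fun p =>
      EuclideanSpace.single (Fin.castLE hkn.le j) 1 + momentCurve n k (p ⟨0, hn⟩) := by
  funext p
  simp only [sharpX, if_pos h, momentCurve]

theorem sharpX_apply_of_apply_zero {p : EuclideanSpace ℝ (Fin n)} (hp : p ⟨0, hn⟩ = 0)
    (j : Fin k) : sharpX n k hkn hn j p = EuclideanSpace.single (Fin.castLE hkn.le j) 1 := by
  by_cases h : (j : ℕ) + 1 = k
  · simp [sharpX_of_eq hkn hn h, hp, momentCurve_zero]
  · simp [sharpX_of_ne hkn hn h]

theorem isIterBracket_iteratedDeriv_momentCurve (hk : 2 ≤ k) (m : ℕ) :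
    IsIterBracket (sharpX n k hkn hn)
      (fun p => iteratedDeriv (m + 1) (momentCurve n k) (p ⟨0, hn⟩)) := by
  have hX₀ : sharpX n k hkn hn ⟨0, by omega⟩ = fun _ => EuclideanSpace.single ⟨0, hn⟩ 1 :=
    sharpX_of_ne hkn hn (by simp; omega)
  have hstep (w : EuclideanSpace ℝ (Fin n)) (m : ℕ) :
      vecLieBracket (sharpX n k hkn hn ⟨0, by omega⟩)
        (fun p => w + iteratedDeriv m (momentCurve n k) (p ⟨0, hn⟩)) =
      fun p => iteratedDeriv (m + 1) (momentCurve n k) (p ⟨0, hn⟩) := by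
    rw [hX₀, vecLieBracket_single_const_add_comp _ _
      ((contDiff_momentCurve n k).differentiable_iteratedDeriv m (by simp)), iteratedDeriv_succ]
  induction m with
  | zero =>
    have hlast := sharpX_of_eq hkn hn (j := ⟨k - 1, by omega⟩) (by simp; omega)
    rw [← iteratedDeriv_zero (f := momentCurve n k)] at hlast
    rw [← hstep, ← hlast]
    exact .bracket (.base _) (.base _)
  | succ m ih =>
    rw [← hstep 0]
    simpa only [zero_add] using IsIterBracket.bracket (.base _) ih

theorem span_iterBracket_sharpX_eq_top (hk : 2 ≤ k) (p : EuclideanSpace ℝ (Fin n)) :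
    Submodule.span ℝ {v | ∃ Z, IsIterBracket (sharpX n k hkn hn) Z ∧ Z p = v} = ⊤ := by
  set W := Submodule.span ℝ {v | ∃ Z, IsIterBracket (sharpX n k hkn hn) Z ∧ Z p = v}
  have hmem {Z} (hZ : IsIterBracket (sharpX n k hkn hn) Z) : Z p ∈ W :=
    Submodule.subset_span ⟨Z, hZ, rfl⟩
  have hhigh : ∀ i : Fin n, ⟨k, hkn⟩ ≤ i → EuclideanSpace.single i 1 ∈ W := by
    refine EuclideanSpace.single_mem_of_triangular
      (fun i => iteratedDeriv ((i : ℕ) - k + 1) (momentCurve n k) (p ⟨0, hn⟩))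
      (fun i _ => hmem (isIterBracket_iteratedDeriv_momentCurve hkn hn hk _))
      (fun i hi => ?_) (fun i j _ hji => ?_)
    · rw [iteratedDeriv_momentCurve_apply, if_pos (Fin.le_def.1 hi), Nat.descFactorial_self,
        Nat.sub_self, pow_zero, mul_one]
      positivity
    · rw [iteratedDeriv_momentCurve_apply]
      split_ifs
      · rw [Nat.descFactorial_eq_zero_iff_lt.2 (by omega)]
        simp
      · rfl
  have hcurve : momentCurve n k (p ⟨0, hn⟩) ∈ W := by
    refine EuclideanSpace.mem_of_forall_single_mem _ fun i hi => hhigh i ?_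
    have hcoord := iteratedDeriv_momentCurve_apply n k 0 (p ⟨0, hn⟩) i
    rw [iteratedDeriv_zero] at hcoord
    rw [hcoord] at hi
    by_contra hlt
    exact hi (if_neg hlt)
  rw [eq_top_iff]
  rintro x -
  refine EuclideanSpace.mem_of_forall_single_mem x fun i _ => ?_
  by_cases hki : k ≤ (i : ℕ)
  · exact hhigh i hki
  have hbase := hmem (.base (X := sharpX n k hkn hn) ⟨i, by omega⟩)
  by_cases hlast : (i : ℕ) + 1 = k
  · rw [sharpX_of_eq hkn hn hlast] at hbase
    simpa only [add_sub_cancel_right, Fin.castLE_mk] using W.sub_mem hbase hcurve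
  · rwa [sharpX_of_ne hkn hn hlast] at hbase

end SharpExample

/-- Sharpness of the bound n − 2 on the Hausdorff dimension of characteristic
sets: the vector fields `sharpX` bracket generate at every point, and for the
hypersurface Σ = {x^n = (x¹)²} the set {x ∈ Σ : x^n = x¹ = 0} is contained in
the characteristic set C(Σ), which therefore has Hausdorff dimension ≥ n − 2. -/
theorem sharp_example_characteristic_set
    (n k : ℕ) (hk : 2 ≤ k) (hkn : k < n) :
    ∀ hn : 0 < n,
    (∀ p : EuclideanSpace ℝ (Fin n), Submodule.span ℝ
        {v : EuclideanSpace ℝ (Fin n) |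
          ∃ Z, IsIterBracket (sharpX n k hkn hn) Z ∧ Z p = v} = ⊤) ∧
    (∀ S C : Set (EuclideanSpace ℝ (Fin n)),
      S = {p | p ⟨n - 1, by omega⟩ = (p ⟨0, hn⟩) ^ 2} →
      C = {p | p ∈ S ∧ ∀ j : Fin k,
          fderiv ℝ (fun q : EuclideanSpace ℝ (Fin n) =>
              q ⟨n - 1, by omega⟩ - (q ⟨0, hn⟩) ^ 2) p
            (sharpX n k hkn hn j p) = 0} →
      {p : EuclideanSpace ℝ (Fin n) |
          p ⟨n - 1, by omega⟩ = 0 ∧ p ⟨0, hn⟩ = 0} ⊆ C ∧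
        (n : ℝ≥0∞) - 2 ≤ dimH C) := by
  intro hn
  refine ⟨span_iterBracket_sharpX_eq_top hkn hn hk, fun S C hS hC => ?_⟩
  have hsub : {p : EuclideanSpace ℝ (Fin n) | p ⟨n - 1, by omega⟩ = 0 ∧ p ⟨0, hn⟩ = 0} ⊆ C := by
    rintro p ⟨hlast, hfirst⟩
    subst hC hS
    refine ⟨by simp [hlast, hfirst], fun j => ?_⟩
    have hj : (⟨n - 1, by omega⟩ : Fin n) ≠ Fin.castLE hkn.le j := by
      simp only [ne_eq, Fin.ext_iff, Fin.val_castLE]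
      omega
    simp [sharpX_apply_of_apply_zero hkn hn hfirst, EuclideanSpace.fderiv_apply_sub_apply_sq,
      hfirst, hj]
  refine ⟨hsub, le_trans ?_ (dimH_mono hsub)⟩
  simpa using EuclideanSpace.le_dimH_setOf_apply_eq_zero (⟨n - 1, by omega⟩ : Fin n) ⟨0, hn⟩
end

section
/- On the contact manifold S₀(M) of horizontally normalized hypersurface elements over a sub-Riemannian manifold M with dilating flow, the contact form θ defined by θ_{(p,e₀,a)}(X) = ⟨π_*X, e₀ + a_β T_β⟩_p satisfies L_X̂ θ = θ, where X̂ is the generator of the lifted dilation flow (p, e₀, a_β) ↦ (λp, e^{−λ}λ_*e₀, e^{(1−γ_β)λ}a_β). -/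
open Real

/-- On the contact manifold S₀(M) of horizontally normalized hypersurface
elements (modelled as triples (p, e₀, a) with e₀ a unit horizontal vector),
the contact form θ_{(p,e₀,a)}(X) = ⟨π_*X, e₀ + Σ_β a_β T_β⟩ satisfies
L_{X̂} θ = θ for the generator X̂ of the lifted dilation flow
(p, e₀, a_β) ↦ (λp, e^{−λ}λ_*e₀, e^{(1−γ_β)λ}a_β). -/
theorem lie_derivative_contact_form_eq_self
    (N l : ℕ)
    -- the Riemannian metric g on M = ℝ^N
    (g : EuclideanSpace ℝ (Fin N) →
      EuclideanSpace ℝ (Fin N) →ₗ[ℝ] EuclideanSpace ℝ (Fin N) →ₗ[ℝ] ℝ)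
    (hgsymm : ∀ p v w, g p v w = g p w v)
    (hgpos : ∀ p v, v ≠ 0 → 0 < g p v v)
    -- the horizontal distribution V₀ and vertical orthonormal frame T_β
    (V0 : EuclideanSpace ℝ (Fin N) → Submodule ℝ (EuclideanSpace ℝ (Fin N)))
    (T : Fin l → EuclideanSpace ℝ (Fin N) → EuclideanSpace ℝ (Fin N))
    (γ : Fin l → ℝ)
    (hTorth : ∀ p β, ∀ h ∈ V0 p, g p h (T β p) = 0)
    (hTon : ∀ p α β, g p (T α p) (T β p) = if α = β then (1 : ℝ) else 0)
    (hcompl : ∀ p, V0 p ⊔ Submodule.span ℝ (Set.range fun β => T β p) = ⊤)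
    -- the dilating flow D and its properties
    (D : ℝ → EuclideanSpace ℝ (Fin N) → EuclideanSpace ℝ (Fin N))
    (hD : ContDiff ℝ (⊤ : ℕ∞) fun q : ℝ × EuclideanSpace ℝ (Fin N) => D q.1 q.2)
    (hD0 : D 0 = id) (hDflow : ∀ s t, D (s + t) = D s ∘ D t)
    (hhor : ∀ s p, ∀ v ∈ V0 p, fderiv ℝ (D s) p v ∈ V0 (D s p))
    (hscaleH : ∀ s p, ∀ v ∈ V0 p, ∀ w ∈ V0 p,
      g (D s p) (fderiv ℝ (D s) p v) (fderiv ℝ (D s) p w)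
        = Real.exp (2 * s) * g p v w)
    (hTscale : ∀ s p β,
      fderiv ℝ (D s) p (T β p) = Real.exp (γ β * s) • T β (D s p))
    -- the lifted flow D̂ on S₀(M) ⊆ M × ℝ^N × ℝ^l
    (Dhat : ℝ → EuclideanSpace ℝ (Fin N) × EuclideanSpace ℝ (Fin N) × (Fin l → ℝ)
      → EuclideanSpace ℝ (Fin N) × EuclideanSpace ℝ (Fin N) × (Fin l → ℝ))
    (hDhat : Dhat = fun s q =>
      (D s q.1, Real.exp (-s) • fderiv ℝ (D s) q.1 q.2.1,
        fun β => Real.exp ((1 - γ β) * s) * q.2.2 β))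
    -- the contact form θ
    (θform : EuclideanSpace ℝ (Fin N) × EuclideanSpace ℝ (Fin N) × (Fin l → ℝ)
      → EuclideanSpace ℝ (Fin N) × EuclideanSpace ℝ (Fin N) × (Fin l → ℝ) → ℝ)
    (hθ : θform = fun q w => g q.1 w.1 (q.2.1 + ∑ β, q.2.2 β • T β q.1)) :
    -- conclusion: L_{X̂}θ = θ at points of S₀(M)
    ∀ q, q.2.1 ∈ V0 q.1 → g q.1 q.2.1 q.2.1 = 1 →
      ∀ w, deriv (fun s => θform (Dhat s q) (fderiv ℝ (Dhat s) q w)) 0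
        = θform q w := by
  rintro ⟨p, e, a⟩ he _hnorm w
  simp only at he _hnorm
  -- decompose w.1 into horizontal + vertical parts
  have hw1 : w.1 ∈ V0 p ⊔ Submodule.span ℝ (Set.range fun β => T β p) := by
    rw [hcompl p]; trivial
  obtain ⟨h, hh, t, ht, hw⟩ := Submodule.mem_sup.mp hw1
  obtain ⟨c, hc⟩ := (Submodule.mem_span_range_iff_exists_fun ℝ).mp ht
  have key : ∀ s, θform (Dhat s (p, e, a)) (fderiv ℝ (Dhat s) (p, e, a) w)
      = Real.exp s * θform (p, e, a) w := by
    intro s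
    have hDs : ContDiff ℝ (⊤ : ℕ∞) (D s) := hD.comp (contDiff_const.prodMk contDiff_id)
    have hfd : ContDiff ℝ (⊤ : ℕ∞) (fderiv ℝ (D s)) := hDs.fderiv_right (by simp)
    have hdA : DifferentiableAt ℝ
        (fun x : EuclideanSpace ℝ (Fin N) × EuclideanSpace ℝ (Fin N) × (Fin l → ℝ) =>
          D s x.1) (p, e, a) :=
      DifferentiableAt.comp _ (hDs.differentiable (by simp) _) differentiableAt_fst
    have hdB : DifferentiableAt ℝ
        (fun x : EuclideanSpace ℝ (Fin N) × EuclideanSpace ℝ (Fin N) × (Fin l → ℝ) =>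
          Real.exp (-s) • fderiv ℝ (D s) x.1 x.2.1) (p, e, a) := by
      apply DifferentiableAt.fun_const_smul
      exact DifferentiableAt.clm_apply
        (DifferentiableAt.comp _ (hfd.differentiable (by simp) _) differentiableAt_fst)
        (differentiableAt_snd.fst)
    have hdC : DifferentiableAt ℝ
        (fun x : EuclideanSpace ℝ (Fin N) × EuclideanSpace ℝ (Fin N) × (Fin l → ℝ) =>
          fun β => Real.exp ((1 - γ β) * s) * x.2.2 β) (p, e, a) := by
      apply differentiableAt_pi.mpr
      intro β
      exact (differentiableAt_const _).mul (differentiableAt_pi.mp differentiableAt_snd.snd β)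
    have hdiffAll : DifferentiableAt ℝ (Dhat s) (p, e, a) := by
      rw [hDhat]
      exact hdA.prodMk (hdB.prodMk hdC)
    -- first component of the derivative of the lifted flow
    have hfst : (fderiv ℝ (Dhat s) (p, e, a) w).1 = fderiv ℝ (D s) p w.1 := by
      have h1 : HasFDerivAt (fun x => (Dhat s x).1)
          ((ContinuousLinearMap.fst ℝ _ _).comp (fderiv ℝ (Dhat s) (p, e, a))) (p, e, a) :=
        hdiffAll.hasFDerivAt.fst
      have h2 : HasFDerivAt
          (fun x : EuclideanSpace ℝ (Fin N) × EuclideanSpace ℝ (Fin N) × (Fin l → ℝ) =>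
            D s x.1)
          ((fderiv ℝ (D s) p).comp (ContinuousLinearMap.fst ℝ _ _)) (p, e, a) :=
        HasFDerivAt.comp _ ((hDs.differentiable (by simp) _).hasFDerivAt) hasFDerivAt_fst
      have heq : (fun x => (Dhat s x).1)
          = (fun x : EuclideanSpace ℝ (Fin N) × EuclideanSpace ℝ (Fin N) × (Fin l → ℝ) =>
              D s x.1) := by
        rw [hDhat]
      rw [heq] at h1
      have huniq := h1.unique h2
      calc (fderiv ℝ (Dhat s) (p, e, a) w).1
          = ((ContinuousLinearMap.fst ℝ _ _).comp (fderiv ℝ (Dhat s) (p, e, a))) w := rfl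
        _ = ((fderiv ℝ (D s) p).comp (ContinuousLinearMap.fst ℝ _ _)) w := by rw [huniq]
        _ = fderiv ℝ (D s) p w.1 := rfl
    -- now compute
    simp only [hθ]
    rw [hfst]
    simp only [hDhat]
    rw [← hw, ← hc]
    set P := D s p with hP
    have hmap : fderiv ℝ (D s) p (h + ∑ β, c β • T β p)
        = fderiv ℝ (D s) p h + ∑ β, (c β * Real.exp (γ β * s)) • T β P := by
      rw [map_add, map_sum]
      congr 1
      refine Finset.sum_congr rfl fun β _ => ?_
      rw [map_smul, hTscale, smul_smul]
    rw [hmap]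
    have hXhor : fderiv ℝ (D s) p h ∈ V0 P := hhor s p h hh
    have hEhor : fderiv ℝ (D s) p e ∈ V0 P := hhor s p e he
    have h1 : g P (fderiv ℝ (D s) p h) (fderiv ℝ (D s) p e)
        = Real.exp (2 * s) * g p h e := hscaleH s p h hh e he
    have h2 : ∀ β, g P (fderiv ℝ (D s) p h) (T β P) = 0 :=
      fun β => hTorth P β _ hXhor
    have h3 : ∀ α, g P (T α P) (fderiv ℝ (D s) p e) = 0 :=
      fun α => by rw [hgsymm]; exact hTorth P α _ hEhor
    have hr2 : ∀ β, g p h (T β p) = 0 := fun β => hTorth p β h hh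
    have hr3 : ∀ α, g p (T α p) e = 0 :=
      fun α => by rw [hgsymm]; exact hTorth p α e he
    simp only [map_add, LinearMap.add_apply, map_smul, LinearMap.smul_apply, map_sum,
      LinearMap.sum_apply, smul_eq_mul, h1, h2, h3, hr2, hr3, hTon, mul_zero, zero_mul,
      add_zero, zero_add, Finset.sum_const_zero, mul_ite, mul_one, Finset.sum_ite_eq,
      Finset.mem_univ, if_true, mul_add, Finset.mul_sum]
    congr 1
    · have hx : Real.exp (-s) * Real.exp (2 * s) = Real.exp s := by
        rw [← Real.exp_add]; congr 1; ring
      rw [← mul_assoc, hx]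
    · refine Finset.sum_congr rfl fun β _ => ?_
      refine Finset.sum_congr rfl fun x _ => ?_
      by_cases hx : x = β
      · subst hx
        simp only [if_true]
        have hex : Real.exp ((1 - γ x) * s) * Real.exp (γ x * s) = Real.exp s := by
          rw [← Real.exp_add]; congr 1; ring
        calc Real.exp ((1 - γ x) * s) * a x * (c x * Real.exp (γ x * s))
            = Real.exp ((1 - γ x) * s) * Real.exp (γ x * s) * (a x * c x) := by ring
          _ = Real.exp s * (a x * c x) := by rw [hex]
      · simp [hx]
  have keyf : (fun s => θform (Dhat s (p, e, a)) (fderiv ℝ (Dhat s) (p, e, a) w))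
      = fun s => Real.exp s * θform (p, e, a) w := funext key
  rw [keyf]
  have hd := (Real.hasDerivAt_exp 0).mul_const (θform (p, e, a) w)
  rw [hd.deriv]
  simp
end

section
/- With notation as above, the perimeter form Λ on S₀(M), defined as the pullback π*(ν ⌟ dV) evaluated at (p, ν, a), satisfies D̂_λ* Λ = e^{(Q−1)λ} Λ, and hence L_X̂ Λ = (Q−1)Λ, where Q is the homogeneous dimension. -/
open Real

noncomputable section

/-- Pullback of a k-form along a map. -/
def pullForm {E F : Type*} [NormedAddCommGroup E] [NormedSpace ℝ E]
    [NormedAddCommGroup F] [NormedSpace ℝ F] {k : ℕ}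
    (f : E → F) (ω : F → (Fin k → F) → ℝ) : E → (Fin k → E) → ℝ :=
  fun p v => ω (f p) (fun i => fderiv ℝ f p (v i))

/-- The perimeter form Λ = π^*(ν ⌟ dV) on S₀(M) ⊆ M × ℝ^{n+1} × ℝ^l scales by
e^{(Q−1)λ} under the lifted dilation flow, hence L_{X̂}Λ = (Q−1)Λ. -/
theorem perimeter_form_scaling
    (n l : ℕ) (Q : ℝ) (hQ : 0 < Q)
    (D : ℝ → EuclideanSpace ℝ (Fin (n + 1)) → EuclideanSpace ℝ (Fin (n + 1)))
    (hD : ContDiff ℝ (⊤ : ℕ∞) fun q : ℝ × EuclideanSpace ℝ (Fin (n + 1)) => D q.1 q.2)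
    (hD0 : D 0 = id) (hDflow : ∀ s t, D (s + t) = D s ∘ D t)
    (γ : Fin l → ℝ)
    -- the Riemannian volume form dV on M, with its dilation scaling
    (dV : EuclideanSpace ℝ (Fin (n + 1)) →
      (Fin (n + 1) → EuclideanSpace ℝ (Fin (n + 1))) → ℝ)
    (halt : ∀ p, ∃ ω : AlternatingMap ℝ (EuclideanSpace ℝ (Fin (n + 1))) ℝ
        (Fin (n + 1)), ∀ v, dV p v = ω v)
    (hsm : ContDiff ℝ (⊤ : ℕ∞) fun q : EuclideanSpace ℝ (Fin (n + 1)) ×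
        (Fin (n + 1) → EuclideanSpace ℝ (Fin (n + 1))) => dV q.1 q.2)
    (hscale : ∀ s : ℝ, pullForm (D s) dV
        = fun p v => Real.exp (s * Q) * dV p v)
    -- the lifted dilation flow D̂ on S₀(M)
    (Dhat : ℝ → EuclideanSpace ℝ (Fin (n + 1)) × EuclideanSpace ℝ (Fin (n + 1))
        × (Fin l → ℝ) → EuclideanSpace ℝ (Fin (n + 1)) ×
        EuclideanSpace ℝ (Fin (n + 1)) × (Fin l → ℝ))
    (hDhat : Dhat = fun s q =>
      (D s q.1, Real.exp (-s) • fderiv ℝ (D s) q.1 q.2.1,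
        fun β => Real.exp ((1 - γ β) * s) * q.2.2 β))
    -- the perimeter form Λ = π^*(ν ⌟ dV)
    (Λ : (EuclideanSpace ℝ (Fin (n + 1)) × EuclideanSpace ℝ (Fin (n + 1))
        × (Fin l → ℝ)) → (Fin n → EuclideanSpace ℝ (Fin (n + 1)) ×
        EuclideanSpace ℝ (Fin (n + 1)) × (Fin l → ℝ)) → ℝ)
    (hΛ : Λ = fun q v => dV q.1 (Fin.cons q.2.1 (fun i => (v i).1))) :
    (∀ s, pullForm (Dhat s) Λ = fun q v => Real.exp ((Q - 1) * s) * Λ q v) ∧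
    (∀ q v, deriv (fun s => pullForm (Dhat s) Λ q v) 0 = (Q - 1) * Λ q v) := by
  have key : ∀ s q v, pullForm (Dhat s) Λ q v = Real.exp ((Q - 1) * s) * Λ q v := by
    intro s q v
    have hDs : ContDiff ℝ (⊤ : ℕ∞) (D s) := hD.comp (contDiff_const.prodMk contDiff_id)
    have hDs' : ContDiff ℝ (⊤ : ℕ∞) (fderiv ℝ (D s)) := hDs.fderiv_right (by simp)
    set A := fderiv ℝ (D s) q.1 with hA
    have hd1 : HasFDerivAt
        (fun r : EuclideanSpace ℝ (Fin (n + 1)) × EuclideanSpace ℝ (Fin (n + 1)) ×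
            (Fin l → ℝ) => D s r.1)
        (A.comp (ContinuousLinearMap.fst ℝ _ _)) q :=
      ((hDs.differentiable (by simp)) q.1).hasFDerivAt.comp q hasFDerivAt_fst
    have hd2 : DifferentiableAt ℝ
        (fun r : EuclideanSpace ℝ (Fin (n + 1)) × EuclideanSpace ℝ (Fin (n + 1)) ×
            (Fin l → ℝ) => Real.exp (-s) • fderiv ℝ (D s) r.1 r.2.1) q := by
      apply DifferentiableAt.fun_const_smul
      exact DifferentiableAt.clm_apply
        (((hDs'.differentiable (by simp)) q.1).comp q differentiableAt_fst)
        differentiableAt_snd.fst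
    have hd3 : DifferentiableAt ℝ
        (fun r : EuclideanSpace ℝ (Fin (n + 1)) × EuclideanSpace ℝ (Fin (n + 1)) ×
            (Fin l → ℝ) => fun β => Real.exp ((1 - γ β) * s) * r.2.2 β) q := by
      rw [differentiableAt_pi]
      intro β
      exact (differentiableAt_const _).mul
        (((ContinuousLinearMap.proj β :
          (Fin l → ℝ) →L[ℝ] ℝ).differentiableAt).comp q differentiableAt_snd.snd)
    have hP : HasFDerivAt
        (fun r : EuclideanSpace ℝ (Fin (n + 1)) × EuclideanSpace ℝ (Fin (n + 1)) ×
            (Fin l → ℝ) =>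
          (D s r.1, Real.exp (-s) • fderiv ℝ (D s) r.1 r.2.1,
            fun β => Real.exp ((1 - γ β) * s) * r.2.2 β))
        ((A.comp (ContinuousLinearMap.fst ℝ _ _)).prod
          (fderiv ℝ (fun r : EuclideanSpace ℝ (Fin (n + 1)) ×
              EuclideanSpace ℝ (Fin (n + 1)) × (Fin l → ℝ) =>
            (Real.exp (-s) • fderiv ℝ (D s) r.1 r.2.1,
              fun β => Real.exp ((1 - γ β) * s) * r.2.2 β)) q)) q :=
      hd1.prodMk (hd2.prodMk hd3).hasFDerivAt
    have hfst : ∀ w, (fderiv ℝ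
        (fun r : EuclideanSpace ℝ (Fin (n + 1)) × EuclideanSpace ℝ (Fin (n + 1)) ×
            (Fin l → ℝ) =>
          (D s r.1, Real.exp (-s) • fderiv ℝ (D s) r.1 r.2.1,
            fun β => Real.exp ((1 - γ β) * s) * r.2.2 β)) q w).1 = A w.1 := by
      intro w
      rw [hP.fderiv]
      rfl
    obtain ⟨ω, hω⟩ := halt (D s q.1)
    simp only [hDhat, hΛ, pullForm]
    simp only [hfst]
    rw [hω]
    have e1 : (Fin.cons (Real.exp (-s) • A q.2.1) (fun i => A ((v i).1)) :
        Fin (n + 1) → EuclideanSpace ℝ (Fin (n + 1)))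
        = Function.update (Fin.cons (A q.2.1) fun i => A ((v i).1)) 0
          (Real.exp (-s) • A q.2.1) := by
      rw [Fin.update_cons_zero]
    rw [e1, ω.map_update_smul, Fin.update_cons_zero]
    have e2 : (Fin.cons (A q.2.1) (fun i => A ((v i).1)) :
        Fin (n + 1) → EuclideanSpace ℝ (Fin (n + 1)))
        = fun j => A ((Fin.cons q.2.1 (fun i => (v i).1) :
          Fin (n + 1) → EuclideanSpace ℝ (Fin (n + 1))) j) := by
      funext j
      refine Fin.cases ?_ ?_ j <;> simp
    rw [e2, ← hω]
    have e3 := congrFun (congrFun (hscale s) q.1)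
      (Fin.cons q.2.1 fun i => (v i).1 : Fin (n + 1) → EuclideanSpace ℝ (Fin (n + 1)))
    simp only [pullForm] at e3
    rw [← hA] at e3
    rw [e3, smul_eq_mul, ← mul_assoc, ← Real.exp_add]
    ring_nf
  constructor
  · intro s
    funext q v
    exact key s q v
  · intro q v
    have hfun : (fun s => pullForm (Dhat s) Λ q v)
        = fun s => Real.exp ((Q - 1) * s) * Λ q v := by
      funext s
      exact key s q v
    rw [hfun]
    have h : HasDerivAt (fun s : ℝ => Real.exp ((Q - 1) * s) * Λ q v)
        (Real.exp ((Q - 1) * 0) * ((Q - 1) * 1) * Λ q v) 0 :=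
      (((hasDerivAt_id (0 : ℝ)).const_mul (Q - 1)).exp).mul_const _
    rw [h.deriv]
    simp

end
end
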